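/- For ∼-classes C and D with CD = C and DD = D: if CD^ω contains an infinite word accepted by the Büchi automaton 𝔄, then every infinite word in CD^ω is accepted by 𝔄. -/

import Mathlib

/-!
A run of the automaton on `w₀w₁w₂⋯` is determined, up to choices inside each block, by the
states it visits at the block boundaries. Whether some run reads `wᵢ` from `p` to `q`, and
whether it can meet `F` meanwhile, depends only on the `∼`-class of `wᵢ`. Two words of `CD^ω`
have blockwise `∼`-equivalent factorisations, so the boundary states of an accepting run on one
of them are those of an accepting run on the other, obtained by gluing block runs together.
-/

variable {Q : Type*} {A : Type*}

/-- Reachability in a nondeterministic automaton: `q` is reachable from `p` reading `w`. -/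
def Reach (δ : Q → A → Set Q) : Q → List A → Q → Prop
  | p, [], q => p = q
  | p, a :: w, q => ∃ r ∈ δ p a, Reach δ r w q

/-- Reachability visiting some final state along the way (possibly the endpoints). -/
def ReachF (δ : Q → A → Set Q) (Fs : Set Q) (p : Q) (w : List A) (q : Q) : Prop :=
  ∃ u v r, w = u ++ v ∧ r ∈ Fs ∧ Reach δ p u r ∧ Reach δ r v q

/-- The relation ∼ : `w ∼ u` iff for all states `p q`, reachability and
reachability-through-final-states via `w` and via `u` coincide. -/
def Sim (δ : Q → A → Set Q) (Fs : Set Q) (w u : List A) : Prop :=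
  ∀ p q : Q, (Reach δ p w q ↔ Reach δ p u q) ∧ (ReachF δ Fs p w q ↔ ReachF δ Fs p u q)

/-- The class of a word in 𝒬 = Σ⁺/∼ ⊎ {[ε]} : for a nonempty word its ∼-class,
and `[ε] = {ε}` for the empty word. -/
def wordClass (δ : Q → A → Set Q) (Fs : Set Q) (w : List A) : Set (List A) :=
  {u | (w = [] ∧ u = []) ∨ (w ≠ [] ∧ u ≠ [] ∧ Sim δ Fs w u)}

/-- `C` is an element of 𝒬. -/
def IsClass (δ : Q → A → Set Q) (Fs : Set Q) (C : Set (List A)) : Prop :=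
  ∃ w : List A, C = wordClass δ Fs w

/-- Elementwise concatenation of languages of finite words. -/
def mulSet (L M : Set (List A)) : Set (List A) := Set.image2 (· ++ ·) L M

/-- Monoid multiplication of classes: the class of the concatenation of representatives. -/
def classMul (δ : Q → A → Set Q) (Fs : Set Q) (C D : Set (List A)) : Set (List A) :=
  {v | ∃ w ∈ C, ∃ u ∈ D, v ∈ wordClass δ Fs (w ++ u)}

/-- Finite star of a language. -/
def starSet (L : Set (List A)) : Set (List A) :=
  {w | ∃ l : List (List A), (∀ u ∈ l, u ∈ L) ∧ w = l.flatten}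

/-- Possibly infinite words over `A` : Σ^{≤ω}, as stable `Option`-valued streams. -/
def Word (A : Type*) : Type _ := {g : ℕ → Option A // ∀ n, g n = none → g (n + 1) = none}

/-- A finite word as an element of Σ^{≤ω}. -/
def ofList (w : List A) : Word A :=
  ⟨fun n => w[n]?, fun n h => by
    rw [List.getElem?_eq_none_iff] at *
    omega⟩

/-- An infinite word as an element of Σ^{≤ω}. -/
def ofStream (s : ℕ → A) : Word A := ⟨fun n => some (s n), fun n h => by simp at h⟩

/- The (possibly infinite) concatenation `f 0 · f 1 · f 2 ⋯` of a sequence of finite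
words, as an element of Σ^{≤ω}. -/
open Classical in
noncomputable def prodWord (f : ℕ → List A) : Word A :=
  ⟨fun n =>
    if h : ∃ k, n < ((List.range k).flatMap f).length then
      ((List.range h.choose).flatMap f)[n]?
    else none, by
    intro n hn
    dsimp only at hn ⊢
    by_cases h : ∃ k, n < ((List.range k).flatMap f).length
    · exfalso
      rw [dif_pos h, List.getElem?_eq_none_iff] at hn
      have := h.choose_spec
      omega
    · have h2 : ¬ ∃ k, n + 1 < ((List.range k).flatMap f).length := by
        push_neg at h ⊢
        intro k
        have := h k
        omega
      rw [dif_neg h2]⟩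

/-- Concatenation of a finite word with a possibly infinite word. -/
def catWord (u : List A) (w : Word A) : Word A :=
  ⟨fun n => if n < u.length then u[n]? else w.1 (n - u.length), by
    intro n hn
    dsimp only at hn ⊢
    by_cases h : n < u.length
    · exfalso
      rw [if_pos h, List.getElem?_eq_none_iff] at hn
      omega
    · rw [if_neg h] at hn
      have h2 : ¬ n + 1 < u.length := by omega
      rw [if_neg h2]
      have h3 : n + 1 - u.length = (n - u.length) + 1 := by omega
      rw [h3]
      exact w.2 _ hn⟩

/-- `CD^ω` : all words `w₀w₁w₂⋯` with `w₀ ∈ C` and `wᵢ ∈ D` for `i ≥ 1`. -/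
def omegaProd (C D : Set (List A)) : Set (Word A) :=
  {w | ∃ f : ℕ → List A, f 0 ∈ C ∧ (∀ i, 1 ≤ i → f i ∈ D) ∧ w = prodWord f}

/-- `L^ω` : all words `w₁w₂w₃⋯` with all `wᵢ ∈ L`. -/
def omegaPow (L : Set (List A)) : Set (Word A) :=
  {w | ∃ f : ℕ → List A, (∀ i, f i ∈ L) ∧ w = prodWord f}

/-- Acceptance of a finite word (as an NFA). -/
def NFAAccepts (δ : Q → A → Set Q) (q0 : Q) (Fs : Set Q) (w : List A) : Prop :=
  ∃ q ∈ Fs, Reach δ q0 w q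

/-- Büchi acceptance of an infinite word: a run from `q0` visiting `Fs` infinitely often. -/
def BuchiAccepts (δ : Q → A → Set Q) (q0 : Q) (Fs : Set Q) (s : ℕ → A) : Prop :=
  ∃ r : ℕ → Q, r 0 = q0 ∧ (∀ n, r (n + 1) ∈ δ (r n) (s n)) ∧ {n | r n ∈ Fs}.Infinite

/-- The language `L(𝔄) ⊆ Σ^{≤ω}` of the extended Büchi automaton: finite words accepted
as an NFA together with infinite words accepted as a Büchi automaton. -/
def LangOf (δ : Q → A → Set Q) (q0 : Q) (Fs : Set Q) : Set (Word A) :=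
  {w | (∃ l : List A, w = ofList l ∧ NFAAccepts δ q0 Fs l) ∨
       (∃ s : ℕ → A, w = ofStream s ∧ BuchiAccepts δ q0 Fs s)}

/-- The set 𝒬 of classes, as a type. -/
def QClass (δ : Q → A → Set Q) (Fs : Set Q) : Type _ := {C : Set (List A) // IsClass δ Fs C}

/-- The set 𝓒 of pairs `(C, D)` of classes with `CD = C` and `DD = D`, as a type. -/
def CPair (δ : Q → A → Set Q) (Fs : Set Q) : Type _ :=
  {p : Set (List A) × Set (List A) //
    IsClass δ Fs p.1 ∧ IsClass δ Fs p.2 ∧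
    classMul δ Fs p.1 p.2 = p.1 ∧ classMul δ Fs p.2 p.2 = p.2}

/-- The language `CD^ω` denoted by an element of 𝓒. -/
def concPair {δ : Q → A → Set Q} {Fs : Set Q} (p : CPair δ Fs) : Set (Word A) :=
  omegaProd p.1.1 p.1.2

/-- A subset 𝒱 ⊆ 𝓒 is closed: whenever `UV^ω ∩ CD^ω ≠ ∅` for `(C,D) ∈ 𝒱` and
`(U,V) ∈ 𝓒`, then `(U,V) ∈ 𝒱`. -/
def IsClosedC {δ : Q → A → Set Q} {Fs : Set Q} (𝒱 : Set (CPair δ Fs)) : Prop :=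
  ∀ p ∈ 𝒱, ∀ q : CPair δ Fs, (concPair q ∩ concPair p).Nonempty → q ∈ 𝒱

/-- Pre-abstraction 𝔣. -/
def frakF (δ : Q → A → Set Q) (Fs : Set Q) (V : Set (Word A)) : Set (CPair δ Fs) :=
  {p | (concPair p ∩ V).Nonempty}

/-- Pre-concretization 𝔤. -/
def frakG {δ : Q → A → Set Q} {Fs : Set Q} (𝒱 : Set (CPair δ Fs)) : Set (Word A) :=
  ⋃ p ∈ 𝒱, concPair p

/-- Closure 𝔠(𝒱) = ⋃_{n ≥ 1} (𝔣 ∘ 𝔤)ⁿ(𝒱). -/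
def frakC {δ : Q → A → Set Q} {Fs : Set Q} (𝒱 : Set (CPair δ Fs)) : Set (CPair δ Fs) :=
  ⋃ n : ℕ, (fun 𝒲 => frakF δ Fs (frakG 𝒲))^[n + 1] 𝒱

/-- Abstraction α_* -/
def alphaStar (δ : Q → A → Set Q) (Fs : Set Q) (U : Set (List A)) : Set (QClass δ Fs) :=
  {C | (C.1 ∩ U).Nonempty}

/-- Concretization γ_* -/
def gammaStar {δ : Q → A → Set Q} {Fs : Set Q} (𝒰 : Set (QClass δ Fs)) : Set (List A) :=
  ⋃ C ∈ 𝒰, C.1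

/-- Abstraction α_{≤ω}. -/
def alphaOmega (δ : Q → A → Set Q) (Fs : Set Q) (V : Set (Word A)) : Set (CPair δ Fs) :=
  frakC (frakF δ Fs V)

/-- Concretization γ_{≤ω}. -/
def gammaOmega {δ : Q → A → Set Q} {Fs : Set Q} (𝒱 : Set (CPair δ Fs)) : Set (Word A) :=
  frakG 𝒱


section Sim

variable {δ : Q → A → Set Q} {Fs : Set Q}

theorem sim_equivalence : Equivalence (Sim δ Fs) where
  refl _ _ _ := ⟨Iff.rfl, Iff.rfl⟩
  symm h p q := ⟨(h p q).1.symm, (h p q).2.symm⟩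
  trans h h' p q := ⟨(h p q).1.trans (h' p q).1, (h p q).2.trans (h' p q).2⟩

theorem sim_of_mem_wordClass {w u v : List A} (hu : u ∈ wordClass δ Fs w)
    (hv : v ∈ wordClass δ Fs w) : Sim δ Fs u v := by
  rcases hu with ⟨hw, rfl⟩ | ⟨hw, -, hu⟩ <;> rcases hv with ⟨hw', rfl⟩ | ⟨hw', -, hv⟩
  · exact sim_equivalence.refl _
  · exact absurd hw hw'
  · exact absurd hw' hw
  · exact sim_equivalence.trans (sim_equivalence.symm hu) hv

end Sim

section Runs

variable {δ : Q → A → Set Q} {Fs : Set Q} {s : ℕ → A}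

theorem reach_append {p q : Q} {u v : List A} :
    Reach δ p (u ++ v) q ↔ ∃ m, Reach δ p u m ∧ Reach δ m v q := by
  induction u generalizing p with
  | nil => simp [Reach]
  | cons a u ih =>
    show (∃ r ∈ δ p a, Reach δ r (u ++ v) q) ↔ ∃ m, (∃ r ∈ δ p a, Reach δ r u m) ∧ Reach δ m v q
    simp only [ih]
    constructor
    · rintro ⟨r, hr, m, hu, hv⟩
      exact ⟨m, ⟨r, hr, hu⟩, hv⟩
    · rintro ⟨m, ⟨r, hr, hu⟩, hv⟩
      exact ⟨r, hr, m, hu, hv⟩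

theorem reach_singleton {p q : Q} {x : A} : Reach δ p [x] q ↔ q ∈ δ p x :=
  ⟨fun ⟨_, hr, hrq⟩ => hrq ▸ hr, fun h => ⟨q, h, rfl⟩⟩

def IsRunOn (δ : Q → A → Set Q) (s : ℕ → A) (r : ℕ → Q) (a b : ℕ) : Prop :=
  ∀ n, a ≤ n → n < b → r (n + 1) ∈ δ (r n) (s n)

theorem IsRunOn.mono {r : ℕ → Q} {a b a' b' : ℕ} (h : IsRunOn δ s r a b) (ha : a ≤ a')
    (hb : b' ≤ b) : IsRunOn δ s r a' b' :=
  fun n h₁ h₂ => h n (ha.trans h₁) (h₂.trans_le hb)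

theorem ite_le_eq_right {r₁ r₂ : ℕ → Q} {b n : ℕ} (hb : r₁ b = r₂ b) (hn : b ≤ n) :
    (if n ≤ b then r₁ n else r₂ n) = r₂ n := by
  split_ifs with h
  · rw [le_antisymm h hn, hb]
  · rfl

theorem IsRunOn.glue {r₁ r₂ : ℕ → Q} {a b c : ℕ} (h₁ : IsRunOn δ s r₁ a b)
    (h₂ : IsRunOn δ s r₂ b c) (hb : r₁ b = r₂ b) :
    IsRunOn δ s (fun n => if n ≤ b then r₁ n else r₂ n) a c := by
  intro n ha hc
  by_cases hnb : n < b
  · simpa [hnb.le, Nat.succ_le_of_lt hnb] using h₁ n ha hnb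
  · simpa [ite_le_eq_right hb (not_lt.1 hnb), show ¬n + 1 ≤ b by omega]
      using h₂ n (not_lt.1 hnb) hc

def streamSlice (s : ℕ → A) (a n : ℕ) : List A := (List.range' a n).map s

theorem streamSlice_add (s : ℕ → A) (a m n : ℕ) :
    streamSlice s a (m + n) = streamSlice s a m ++ streamSlice s (a + m) n := by
  rw [streamSlice, streamSlice, streamSlice, ← List.map_append]
  simp

theorem streamSlice_one (s : ℕ → A) (a : ℕ) : streamSlice s a 1 = [s a] := rfl

theorem reach_streamSlice_iff {a n : ℕ} {p q : Q} :
    Reach δ p (streamSlice s a n) q ↔ ∃ r, IsRunOn δ s r a (a + n) ∧ r a = p ∧ r (a + n) = q := by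
  induction n generalizing q with
  | zero =>
    refine ⟨fun h => ⟨fun _ => p, fun n h₁ h₂ => by omega, rfl, h⟩, ?_⟩
    rintro ⟨r, -, rfl, rfl⟩
    rfl
  | succ n ih =>
    simp only [streamSlice_add s a n 1, streamSlice_one, reach_append, reach_singleton, ih,
      ← add_assoc]
    constructor
    · rintro ⟨_, ⟨r, hr, rfl, rfl⟩, hq⟩
      refine ⟨Function.update r (a + n + 1) q, fun m h₁ h₂ => ?_,
        Function.update_of_ne (by omega) _ _, Function.update_self _ _ _⟩
      rcases (Nat.lt_succ_iff.1 h₂).lt_or_eq with h₂ | rfl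
      · rw [Function.update_of_ne (by omega), Function.update_of_ne (by omega)]
        exact hr m h₁ h₂
      · rwa [Function.update_self, Function.update_of_ne (by omega)]
    · rintro ⟨r, hr, rfl, rfl⟩
      exact ⟨r (a + n), ⟨r, hr.mono le_rfl (by omega), rfl, rfl⟩, hr (a + n) (by omega) (by omega)⟩

theorem reachF_streamSlice_iff {a n : ℕ} {p q : Q} :
    ReachF δ Fs p (streamSlice s a n) q ↔
      ∃ r, IsRunOn δ s r a (a + n) ∧ r a = p ∧ r (a + n) = q ∧
        ∃ m ∈ Set.Icc a (a + n), r m ∈ Fs := by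
  constructor
  · rintro ⟨u, v, m, huv, hm, hu, hv⟩
    generalize hk : u.length = k at *
    have hkn : k ≤ n := by
      have := congrArg List.length huv
      simp only [streamSlice, List.length_map, List.length_range', List.length_append] at this
      omega
    obtain ⟨rfl, rfl⟩ := List.append_inj
      (huv.symm.trans (by rw [← streamSlice_add, Nat.add_sub_cancel' hkn]))
      (by simp [streamSlice, hk])
    obtain ⟨r₁, h₁, rfl, rfl⟩ := reach_streamSlice_iff.1 hu
    obtain ⟨r₂, h₂, e₂, rfl⟩ := reach_streamSlice_iff.1 hv
    rw [show a + k + (n - k) = a + n by omega] at h₂ ⊢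
    refine ⟨_, h₁.glue h₂ e₂.symm, by simp, ite_le_eq_right e₂.symm (by omega),
      a + k, ⟨by omega, by omega⟩, by simpa using hm⟩
  · rintro ⟨r, hr, rfl, rfl, m, ⟨ham, hmn⟩, hm⟩
    refine ⟨streamSlice s a (m - a), streamSlice s m (a + n - m), r m, ?_, hm,
      reach_streamSlice_iff.2 ⟨r, hr.mono le_rfl (by omega), rfl, by rw [Nat.add_sub_cancel' ham]⟩,
      reach_streamSlice_iff.2 ⟨r, hr.mono ham (by omega), rfl, by rw [Nat.add_sub_cancel' hmn]⟩⟩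
    have := streamSlice_add s a (m - a) (a + n - m)
    rwa [Nat.add_sub_cancel' ham, show m - a + (a + n - m) = n by omega] at this

end Runs

section Gluing

variable {δ : Q → A → Set Q} {Fs : Set Q} {s : ℕ → A} (L : ℕ → ℕ) (ρ : ℕ → ℕ → Q)

/-- Follows `ρ i` on `[L i, L (i + 1)]` for `i ≤ k`; letting `k → ∞` glues the `ρ i` into a
single run. -/
def gluedRun : ℕ → ℕ → Q
  | 0 => ρ 0
  | k + 1 => fun n => if n ≤ L (k + 1) then gluedRun k n else ρ (k + 1) n

variable {L ρ}

theorem gluedRun_succ_of_le {k n : ℕ} (hn : n ≤ L (k + 1)) :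
    gluedRun L ρ (k + 1) n = gluedRun L ρ k n := by
  simp [gluedRun, hn]

theorem gluedRun_eq_gluedRun (hL : Monotone L) {k k' n : ℕ} (hn : n ≤ L (k + 1)) (hk : k ≤ k') :
    gluedRun L ρ k' n = gluedRun L ρ k n := by
  induction k', hk using Nat.le_induction with
  | base => rfl
  | succ k' hk ih => rw [gluedRun_succ_of_le (hn.trans (hL (by omega))), ih]

theorem gluedRun_apply_zero (hL : Monotone L) (k : ℕ) : gluedRun L ρ k 0 = ρ 0 0 :=
  gluedRun_eq_gluedRun hL (Nat.zero_le _) (Nat.zero_le k)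

theorem gluedRun_eq_of_le (hmatch : ∀ i, ρ i (L (i + 1)) = ρ (i + 1) (L (i + 1)))
    (hL : Monotone L) {k n : ℕ} (hn : L k ≤ n) :
    gluedRun L ρ k n = ρ k n := by
  induction k generalizing n with
  | zero => rfl
  | succ k ih =>
    exact ite_le_eq_right ((ih (hL k.le_succ)).trans (hmatch k)) hn

theorem isRunOn_gluedRun (hmatch : ∀ i, ρ i (L (i + 1)) = ρ (i + 1) (L (i + 1)))
    (hL : Monotone L) (hρ : ∀ i, IsRunOn δ s (ρ i) (L i) (L (i + 1))) (k : ℕ) :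
    IsRunOn δ s (gluedRun L ρ k) (L 0) (L (k + 1)) := by
  induction k with
  | zero => exact hρ 0
  | succ k ih =>
    exact ih.glue (hρ (k + 1)) ((gluedRun_eq_of_le hmatch hL (hL k.le_succ)).trans (hmatch k))

theorem buchiAccepts_of_isRunOn_blocks (hmatch : ∀ i, ρ i (L (i + 1)) = ρ (i + 1) (L (i + 1)))
    (hL0 : L 0 = 0) (hL : Monotone L) (hunb : ∀ n, ∃ k, n < L k)
    (hρ : ∀ i, IsRunOn δ s (ρ i) (L i) (L (i + 1)))
    (hF : {i | ∃ m ∈ Set.Icc (L i) (L (i + 1)), ρ i m ∈ Fs}.Infinite) :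
    BuchiAccepts δ (ρ 0 0) Fs s := by
  choose K hK using hunb
  have hK' (n : ℕ) : n < L (K n + 1) := (hK n).trans_le (hL (Nat.le_add_right _ 1))
  have hr : ∀ n k, n ≤ L (k + 1) → gluedRun L ρ (K n) n = gluedRun L ρ k n := fun n k hn =>
    (gluedRun_eq_gluedRun hL (hK' n).le (le_max_left _ k)).symm.trans
      (gluedRun_eq_gluedRun hL hn (le_max_right _ _))
  refine ⟨fun n => gluedRun L ρ (K n) n, gluedRun_apply_zero hL _, fun n => ?_, ?_⟩
  · show gluedRun L ρ (K (n + 1)) (n + 1) ∈ δ (gluedRun L ρ (K n) n) (s n)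
    rw [hr n (K (n + 1)) (by have := hK' (n + 1); omega)]
    exact isRunOn_gluedRun hmatch hL hρ _ n (by simp [hL0]) (by have := hK' (n + 1); omega)
  · refine Set.infinite_of_forall_exists_gt fun N => ?_
    obtain ⟨i, ⟨m, hm, hmF⟩, hi⟩ := hF.exists_gt (K N)
    refine ⟨m, ?_, (hK N).trans_le ((hL hi.le).trans hm.1)⟩
    show gluedRun L ρ (K m) m ∈ Fs
    rwa [hr m i hm.2, gluedRun_eq_of_le hmatch hL hm.1]

end Gluing

section Blocks

variable {δ : Q → A → Set Q} {Fs : Set Q} {q0 : Q} {s : ℕ → A} {g : ℕ → List A}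

def blockStart (g : ℕ → List A) (i : ℕ) : ℕ := ((List.range i).flatMap g).length

theorem blockStart_zero : blockStart g 0 = 0 := rfl

theorem blockStart_succ (i : ℕ) : blockStart g (i + 1) = blockStart g i + (g i).length := by
  simp [blockStart, List.range_succ]

theorem blockStart_mono : Monotone (blockStart g) :=
  monotone_nat_of_le_succ fun i => by rw [blockStart_succ]; omega

theorem flatMap_range_prefix {k k' : ℕ} (hk : k ≤ k') :
    (List.range k).flatMap g <+: (List.range k').flatMap g := by
  rw [← min_eq_left hk, ← List.take_range]
  exact (List.take_prefix k _).flatMap g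

theorem getElem?_flatMap_range_of_le {k k' n : ℕ} (hk : k ≤ k') (hn : n < blockStart g k) :
    ((List.range k).flatMap g)[n]? = ((List.range k').flatMap g)[n]? := by
  rw [List.getElem?_eq_getElem hn, List.prefix_iff_getElem?.1 (flatMap_range_prefix hk) n hn]

theorem exists_blockStart_le_lt (hunb : ∀ n, ∃ k, n < blockStart g k) (n : ℕ) :
    ∃ i, blockStart g i ≤ n ∧ n < blockStart g (i + 1) := by
  classical
  have hpos : Nat.find (hunb n) ≠ 0 := fun h0 => by
    simpa [h0, blockStart_zero] using Nat.find_spec (hunb n)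
  obtain ⟨i, hi⟩ := Nat.exists_eq_succ_of_ne_zero hpos
  exact ⟨i, not_lt.1 (Nat.find_min (hunb n) (by omega)), by simpa [hi] using Nat.find_spec (hunb n)⟩

theorem exists_lt_blockStart_and_eq_streamSlice (h : ofStream s = prodWord g) :
    (∀ n, ∃ k, n < blockStart g k) ∧ ∀ i, g i = streamSlice s (blockStart g i) (g i).length := by
  have hval (n : ℕ) : (prodWord g).1 n = some (s n) := (congrFun (congrArg Subtype.val h) n).symm
  have hunb (n : ℕ) : ∃ k, n < blockStart g k := by
    by_contra hn
    exact Option.some_ne_none _ ((hval n).symm.trans (dif_neg hn))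
  have hget (k n : ℕ) (hn : n < blockStart g k) : ((List.range k).flatMap g)[n]? = some (s n) := by
    have hc : ((List.range (hunb n).choose).flatMap g)[n]? = some (s n) :=
      (dif_pos (hunb n)).symm.trans (hval n)
    rw [getElem?_flatMap_range_of_le (le_max_left k (hunb n).choose) hn, ← hc,
      getElem?_flatMap_range_of_le (le_max_right k _) (hunb n).choose_spec]
  have hflat (k : ℕ) : (List.range k).flatMap g = streamSlice s 0 (blockStart g k) := by
    refine List.ext_getElem? fun n => ?_
    rcases lt_or_ge n (blockStart g k) with hn | hn
    · rw [hget k n hn, streamSlice, List.getElem?_map, List.getElem?_range' hn]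
      simp
    · rw [List.getElem?_eq_none hn, List.getElem?_eq_none (by simpa [streamSlice] using hn)]
  refine ⟨hunb, fun i => List.append_cancel_left (as := (List.range i).flatMap g) ?_⟩
  calc (List.range i).flatMap g ++ g i = (List.range (i + 1)).flatMap g := by
        simp [List.range_succ]
    _ = _ := by rw [hflat, blockStart_succ, streamSlice_add, zero_add, hflat]

end Blocks

section BlockAcceptance

variable {δ : Q → A → Set Q} {Fs : Set Q} {q0 : Q} {s : ℕ → A} {g : ℕ → List A}

def BlockBuchiAccepts (δ : Q → A → Set Q) (q0 : Q) (Fs : Set Q) (g : ℕ → List A) : Prop :=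
  ∃ q : ℕ → Q, q 0 = q0 ∧ (∀ i, Reach δ (q i) (g i) (q (i + 1))) ∧
    {i | ReachF δ Fs (q i) (g i) (q (i + 1))}.Infinite

theorem BlockBuchiAccepts.of_sim {g' : ℕ → List A} (h : BlockBuchiAccepts δ q0 Fs g)
    (hsim : ∀ i, Sim δ Fs (g i) (g' i)) : BlockBuchiAccepts δ q0 Fs g' := by
  obtain ⟨q, hq0, hreach, hinf⟩ := h
  exact ⟨q, hq0, fun i => ((hsim i _ _).1).1 (hreach i),
    hinf.mono fun i hi => ((hsim i _ _).2).1 hi⟩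

theorem blockBuchiAccepts_of_buchiAccepts (h : ofStream s = prodWord g)
    (hs : BuchiAccepts δ q0 Fs s) : BlockBuchiAccepts δ q0 Fs g := by
  obtain ⟨hunb, hblock⟩ := exists_lt_blockStart_and_eq_streamSlice h
  obtain ⟨r, hr0, hrun, hinf⟩ := hs
  have hrunOn (a b : ℕ) : IsRunOn δ s r a b := fun n _ _ => hrun n
  refine ⟨fun i => r (blockStart g i), hr0, fun i => ?_, ?_⟩
  · rw [hblock i]
    exact reach_streamSlice_iff.2 ⟨r, hrunOn _ _, rfl, congrArg r (blockStart_succ i).symm⟩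
  · refine Set.infinite_of_forall_exists_gt fun N => ?_
    obtain ⟨m, hm, hNm⟩ := hinf.exists_gt (blockStart g (N + 1))
    obtain ⟨i, hi, hmi⟩ := exists_blockStart_le_lt hunb m
    refine ⟨i, ?_, ?_⟩
    · show ReachF δ Fs (r (blockStart g i)) (g i) (r (blockStart g (i + 1)))
      rw [hblock i, blockStart_succ]
      exact reachF_streamSlice_iff.2 ⟨r, hrunOn _ _, rfl, rfl, m, ⟨hi, by
        rw [← blockStart_succ]; exact hmi.le⟩, hm⟩
    · by_contra! hiN
      have := blockStart_mono (g := g) (show i + 1 ≤ N + 1 by omega)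
      omega

theorem buchiAccepts_of_blockBuchiAccepts (h : ofStream s = prodWord g)
    (hg : BlockBuchiAccepts δ q0 Fs g) : BuchiAccepts δ q0 Fs s := by
  obtain ⟨hunb, hblock⟩ := exists_lt_blockStart_and_eq_streamSlice h
  obtain ⟨q, rfl, hreach, hinf⟩ := hg
  have hruns (i : ℕ) : ∃ r, IsRunOn δ s r (blockStart g i) (blockStart g (i + 1)) ∧
      r (blockStart g i) = q i ∧ r (blockStart g (i + 1)) = q (i + 1) ∧
      (ReachF δ Fs (q i) (g i) (q (i + 1)) →
        ∃ m ∈ Set.Icc (blockStart g i) (blockStart g (i + 1)), r m ∈ Fs) := by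
    rw [blockStart_succ]
    by_cases hF : ReachF δ Fs (q i) (g i) (q (i + 1))
    · rw [hblock i] at hF
      obtain ⟨r, hr, h₁, h₂, hm⟩ := reachF_streamSlice_iff.1 hF
      exact ⟨r, hr, h₁, h₂, fun _ => hm⟩
    · have hi := hreach i
      rw [hblock i] at hi
      obtain ⟨r, hr, h₁, h₂⟩ := reach_streamSlice_iff.1 hi
      exact ⟨r, hr, h₁, h₂, fun h => absurd h hF⟩
  choose ρ hρ hstart hend hF using hruns
  have := buchiAccepts_of_isRunOn_blocks (fun i => (hend i).trans (hstart (i + 1)).symm)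
    blockStart_zero blockStart_mono hunb hρ (hinf.mono hF)
  convert this using 1
  exact (hstart 0).symm

theorem buchiAccepts_of_sim {s' : ℕ → A} {g' : ℕ → List A} (h : ofStream s = prodWord g)
    (h' : ofStream s' = prodWord g') (hsim : ∀ i, Sim δ Fs (g i) (g' i))
    (hs : BuchiAccepts δ q0 Fs s) : BuchiAccepts δ q0 Fs s' :=
  buchiAccepts_of_blockBuchiAccepts h' ((blockBuchiAccepts_of_buchiAccepts h hs).of_sim hsim)

end BlockAcceptance

theorem omegaProd_accepts_all_general {Q A : Type*}
    (δ : Q → A → Set Q) (q0 : Q) (Fs : Set Q)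
    (C D : Set (List A)) (hC : IsClass δ Fs C) (hD : IsClass δ Fs D)
    (h : ∃ s : ℕ → A, ofStream s ∈ omegaProd C D ∧ BuchiAccepts δ q0 Fs s) :
    ∀ s : ℕ → A, ofStream s ∈ omegaProd C D → BuchiAccepts δ q0 Fs s := by
  obtain ⟨s₀, ⟨f₀, hf₀C, hf₀D, hs₀⟩, hacc⟩ := h
  rintro s ⟨f, hfC, hfD, hs⟩
  obtain ⟨c, rfl⟩ := hC
  obtain ⟨d, rfl⟩ := hD
  have hsim : ∀ i, Sim δ Fs (f₀ i) (f i)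
    | 0 => sim_of_mem_wordClass hf₀C hfC
    | i + 1 => sim_of_mem_wordClass (hf₀D _ i.succ_pos) (hfD _ i.succ_pos)
  exact buchiAccepts_of_sim hs₀ hs hsim hacc

/-- for classes `C, D` with `CD = C`, `DD = D`, if `CD^ω` contains an
infinite word accepted by the Büchi automaton, then every infinite word in `CD^ω` is
accepted. -/
theorem omegaProd_accepts_all {Q A : Type*} [Finite Q] [Finite A]
    (δ : Q → A → Set Q) (q0 : Q) (Fs : Set Q)
    (C D : Set (List A)) (hC : IsClass δ Fs C) (hD : IsClass δ Fs D)
    (hCD : classMul δ Fs C D = C) (hDD : classMul δ Fs D D = D)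
    (h : ∃ s : ℕ → A, ofStream s ∈ omegaProd C D ∧ BuchiAccepts δ q0 Fs s) :
    ∀ s : ℕ → A, ofStream s ∈ omegaProd C D → BuchiAccepts δ q0 Fs s :=
  omegaProd_accepts_all_general δ q0 Fs C D hC hD h
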